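/- arXiv:2208.14830 — 3 statements merged into one kernel-verified Lean document; each statement's English description precedes it below -/
import Mathlib

section
/- For a finite word α = c_1...c_n of positive integers with transpose α* = c_n...c_1, the ratio of interval sizes satisfies [1; c_n+1]/[1; c_1] ≤ s(α*)/s(α) ≤ [1; c_n]/[1; c_1+1], where [1;c] = 1 + 1/c. -/
/-- The continuant `K(c₁ … cₙ)`, i.e. the denominator of the finite continued
fraction `[0; c₁, …, cₙ]`, with `K([]) = 1`. -/
def contK : List ℕ → ℕ
  | [] => 1
  | [c] => c
  | c :: d :: l => c * contK (d :: l) + contK l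

/-- The numerator `p` of the finite continued fraction `[0; c₁, …, cₙ]`. -/
def contP : List ℕ → ℕ
  | [] => 0
  | _ :: t => contK t

/-- The size of the interval of numbers in `[0,1]` whose continued fraction
expansion begins with the word `w`. -/
noncomputable def cfsize (w : List ℕ) : ℝ :=
  1 / ((contK w : ℝ) * ((contK w : ℝ) + (contK w.dropLast : ℝ)))

/-- The Pell numbers, `P 0 = 0`, `P 1 = 1`, `P (k+1) = 2 P k + P (k-1)`. -/
def pell : ℕ → ℕ
  | 0 => 0
  | 1 => 1
  | n + 2 => 2 * pell (n + 1) + pell n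

def contD : List ℕ → ℕ
  | [] => 0
  | c :: t => contK ((c :: t).dropLast)

lemma contK_cons (c : ℕ) (t : List ℕ) : contK (c :: t) = c * contK t + contP t := by
  match t with
  | [] => simp [contK, contP]
  | d :: s => rfl

lemma contD_cons (c : ℕ) (t : List ℕ) : contD (c :: t) = contK ((c :: t).dropLast) := rfl

lemma contK_append_singleton : ∀ (l : List ℕ) (c : ℕ),
    contK (l ++ [c]) = c * contK l + contD l
  | [], c => by simp [contK, contD]
  | [d], c => by simp [contK, contD]; ring
  | d :: e :: t, c => by
    have h1 := contK_append_singleton (e :: t) c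
    have h2 := contK_append_singleton t c
    show contK (d :: e :: (t ++ [c])) = c * contK (d :: e :: t) + contD (d :: e :: t)
    have hL : contK (d :: e :: (t ++ [c]))
        = d * contK (e :: t ++ [c]) + contK (t ++ [c]) := rfl
    rw [hL, h1, h2]
    have hD : contD (d :: e :: t) = d * contD (e :: t) + contD t := by
      match t with
      | [] => simp [contD, contK]
      | f :: u =>
        show contK (d :: e :: (f :: u).dropLast) = d * contK (e :: (f :: u).dropLast) + contK ((f::u).dropLast)
        rfl
    rw [hD]
    have : contK (d :: e :: t) = d * contK (e :: t) + contK t := rfl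
    rw [this]
    ring

lemma contK_reverse : ∀ l : List ℕ, contK l.reverse = contK l
  | [] => rfl
  | [c] => rfl
  | c :: d :: t => by
    have h1 := contK_reverse (d :: t)
    have h2 := contK_reverse t
    have hr : (c :: d :: t : List ℕ).reverse = (d :: t).reverse ++ [c] := by simp
    rw [hr, contK_append_singleton, h1]
    have hr2 : (d :: t : List ℕ).reverse = t.reverse ++ [d] := by simp
    have hD : contD ((d :: t : List ℕ).reverse) = contK t := by
      rw [hr2]
      have : contD (t.reverse ++ [d]) = contK ((t.reverse ++ [d]).dropLast) := by
        match h : t.reverse ++ [d] with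
        | [] => simp at h
        | x :: s => rfl
      rw [this, List.dropLast_concat, h2]
    rw [hD]
    show c * contK (d :: t) + contK t = c * contK (d :: t) + contK t
    rfl

lemma contP_le_contK (t : List ℕ) (h : ∀ c ∈ t, 0 < c) : contP t ≤ contK t := by
  match t with
  | [] => simp [contP, contK]
  | d :: s =>
    show contK s ≤ contK (d :: s)
    rw [contK_cons]
    have hd : 1 ≤ d := h d (by simp)
    nlinarith [Nat.zero_le (contP s)]

lemma contK_pos (l : List ℕ) (h : ∀ c ∈ l, 0 < c) : 0 < contK l := by
  induction l with
  | nil => simp [contK]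
  | cons c t ih =>
    rw [contK_cons]
    have hc : 0 < c := h c (by simp)
    have ht : 0 < contK t := ih (fun x hx => h x (by simp [hx]))
    nlinarith [Nat.zero_le (contP t)]

lemma front_bounds (c : ℕ) (t : List ℕ) (h : ∀ x ∈ t, 0 < x) :
    c * contK t ≤ contK (c :: t) ∧ contK (c :: t) ≤ (c + 1) * contK t := by
  rw [contK_cons]
  constructor
  · omega
  · have := contP_le_contK t h
    nlinarith

/-- For a word `α` with first letter `c₁` and last letter `cₙ`, the ratio of
the interval size of the transposed word to that of `α` satisfies
`[1; cₙ+1]/[1; c₁] ≤ s(α*)/s(α) ≤ [1; cₙ]/[1; c₁+1]`. -/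
theorem cfsize_transpose_ratio (α : List ℕ) (c1 cn : ℕ) (hpos : ∀ c ∈ α, 0 < c)
    (h1 : α.head? = some c1) (h2 : α.getLast? = some cn) :
    (1 + 1 / ((cn : ℝ) + 1)) / (1 + 1 / (c1 : ℝ)) ≤ cfsize α.reverse / cfsize α ∧
      cfsize α.reverse / cfsize α ≤ (1 + 1 / (cn : ℝ)) / (1 + 1 / ((c1 : ℝ) + 1)) := by
  -- α is nonempty
  obtain ⟨t, rfl⟩ : ∃ t, α = c1 :: t := by
    cases α with
    | nil => simp at h1
    | cons a t =>
      simp only [List.head?_cons, Option.some.injEq] at h1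
      exact ⟨t, by rw [h1]⟩
  -- positivity of letters of t
  have hpost : ∀ x ∈ t, 0 < x := fun x hx => hpos x (by simp [hx])
  -- decompose the reverse
  have hrev : (c1 :: t).reverse.head? = some cn := by
    rw [List.head?_reverse]; exact h2
  obtain ⟨r, hr⟩ : ∃ r, (c1 :: t).reverse = cn :: r := by
    cases hrv : (c1 :: t).reverse with
    | nil => rw [hrv] at hrev; simp at hrev
    | cons x r =>
      rw [hrv] at hrev; simp at hrev; exact ⟨r, by rw [hrev]⟩
  have hα : (c1 :: t) = r.reverse ++ [cn] := by
    rw [← List.reverse_reverse (c1 :: t), hr]; simp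
  have hdrop : (c1 :: t).dropLast = r.reverse := by
    rw [hα, List.dropLast_concat]
  have hposr : ∀ x ∈ r, 0 < x := by
    intro x hx
    apply hpos
    rw [← List.mem_reverse, hr]
    simp [hx]
  -- natural number quantities
  have hrevq : contK ((c1 :: t).reverse) = contK (c1 :: t) := contK_reverse _
  have hrevd2 : contK (((c1 :: t).reverse).dropLast) = contK t := by
    rw [List.dropLast_reverse]
    exact contK_reverse t
  have hA : contK ((c1 :: t).dropLast) = contK r := by
    rw [hdrop]; exact contK_reverse r
  -- front bounds for α
  obtain ⟨hb1n, hb2n⟩ := front_bounds c1 t hpost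
  -- back bounds via the reverse
  obtain ⟨hb3n', hb4n'⟩ := front_bounds cn r hposr
  rw [← hr, hrevq] at hb3n' hb4n'
  -- positivity
  have hc1 : 0 < c1 := hpos c1 (by simp)
  have hcn : 0 < cn := by
    apply hpos
    rw [← List.mem_reverse, hr]
    simp
  have hq : 0 < contK (c1 :: t) := contK_pos _ hpos
  have hBpos : 0 < contK t := contK_pos t hpost
  have hApos : 0 < contK r := contK_pos r hposr
  -- real versions
  set q : ℝ := (contK (c1 :: t) : ℝ) with hqdef
  set A : ℝ := (contK r : ℝ) with hAdef
  set B : ℝ := (contK t : ℝ) with hBdef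
  have hb1 : (c1 : ℝ) * B ≤ q := by rw [hqdef, hBdef]; exact_mod_cast hb1n
  have hb2 : q ≤ ((c1 : ℝ) + 1) * B := by rw [hqdef, hBdef]; exact_mod_cast hb2n
  have hb3 : (cn : ℝ) * A ≤ q := by rw [hqdef, hAdef]; exact_mod_cast hb3n'
  have hb4 : q ≤ ((cn : ℝ) + 1) * A := by rw [hqdef, hAdef]; exact_mod_cast hb4n'
  have hc1R : (1 : ℝ) ≤ c1 := by exact_mod_cast hc1
  have hcnR : (1 : ℝ) ≤ cn := by exact_mod_cast hcn
  have hqR : (0 : ℝ) < q := by rw [hqdef]; exact_mod_cast hq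
  have hAR : (0 : ℝ) < A := by rw [hAdef]; exact_mod_cast hApos
  have hBR : (0 : ℝ) < B := by rw [hBdef]; exact_mod_cast hBpos
  -- the ratio of interval sizes
  have hratio : cfsize ((c1 :: t).reverse) / cfsize (c1 :: t) = (q + A) / (q + B) := by
    rw [cfsize, cfsize, hrevq, hrevd2, hA]
    rw [← hqdef, ← hAdef, ← hBdef]
    have n1 : q ≠ 0 := ne_of_gt hqR
    have n2 : q + A ≠ 0 := by positivity
    have n3 : q + B ≠ 0 := by positivity
    field_simp
  rw [hratio]
  have hd1 : (0 : ℝ) < 1 + 1 / (c1 : ℝ) := by positivity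
  have hd2 : (0 : ℝ) < 1 + 1 / ((c1 : ℝ) + 1) := by positivity
  have hd3 : (0 : ℝ) < q + B := by positivity
  have hc1ne : (c1 : ℝ) ≠ 0 := by positivity
  have hcnne : (cn : ℝ) ≠ 0 := by positivity
  have e1 : 1 + 1 / ((cn : ℝ) + 1) = ((cn : ℝ) + 2) / ((cn : ℝ) + 1) := by
    field_simp; ring
  have e2 : 1 + 1 / (c1 : ℝ) = ((c1 : ℝ) + 1) / (c1 : ℝ) := by
    field_simp
  have e3 : 1 + 1 / (cn : ℝ) = ((cn : ℝ) + 1) / (cn : ℝ) := by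
    field_simp
  have e4 : 1 + 1 / ((c1 : ℝ) + 1) = ((c1 : ℝ) + 2) / ((c1 : ℝ) + 1) := by
    field_simp; ring
  constructor
  · rw [e1, e2, div_div_div_eq]
    rw [div_le_div_iff₀ (by positivity) (by positivity)]
    have key1 : ((cn : ℝ) + 2) * ((c1 : ℝ) * B) ≤ ((cn : ℝ) + 2) * q :=
      mul_le_mul_of_nonneg_left hb1 (by linarith)
    have key2 : ((c1 : ℝ) + 1) * q ≤ ((c1 : ℝ) + 1) * (((cn : ℝ) + 1) * A) :=
      mul_le_mul_of_nonneg_left hb4 (by linarith)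
    nlinarith
  · rw [e3, e4, div_div_div_eq]
    rw [div_le_div_iff₀ (by positivity) (by positivity)]
    have key3 : ((c1 : ℝ) + 2) * ((cn : ℝ) * A) ≤ ((c1 : ℝ) + 2) * q :=
      mul_le_mul_of_nonneg_left hb3 (by linarith)
    have key4 : ((cn : ℝ) + 1) * q ≤ ((cn : ℝ) + 1) * (((c1 : ℝ) + 1) * B) :=
      mul_le_mul_of_nonneg_left hb2 (by linarith)
    nlinarith
end

section
/- Let U and m be positive reals with U a positive integer and U ≤ m. Then the number of tuples (ℓ, x_1, ..., x_ℓ) with ℓ ≥ 1 an integer, each x_i a positive integer, and x_1 + ... + x_ℓ ≤ (U − ℓ)·m, is at most U·e^{W(m)(U+1)}, where W is the Lambert W function (the inverse of x ↦ x e^x on [−1,∞)). -/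
/-- Partial sums of a tuple of naturals. -/
def psum {ℓ : ℕ} (x : Fin ℓ → ℕ) (i : Fin ℓ) : ℕ :=
  ∑ j ∈ Finset.univ.filter (fun j => j ≤ i), x j

lemma psum_strictMono {ℓ : ℕ} {x : Fin ℓ → ℕ} (hx : ∀ i, 1 ≤ x i) :
    StrictMono (psum x) := by
  intro a b hab
  apply Finset.sum_lt_sum_of_subset (i := b)
  · intro j hj
    simp only [Finset.mem_filter, Finset.mem_univ, true_and] at hj ⊢
    exact hj.trans hab.le
  · simp
  · simp [not_le.mpr hab]
  · exact hx b
  · intro j _ _; exact Nat.zero_le _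

lemma one_le_psum {ℓ : ℕ} {x : Fin ℓ → ℕ} (hx : ∀ i, 1 ≤ x i) (i : Fin ℓ) :
    1 ≤ psum x i := by
  calc 1 ≤ x i := hx i
  _ ≤ psum x i := Finset.single_le_sum (f := x) (fun j _ => Nat.zero_le _) (by simp)

lemma psum_le_total {ℓ : ℕ} (x : Fin ℓ → ℕ) (i : Fin ℓ) :
    psum x i ≤ ∑ j, x j :=
  Finset.sum_le_sum_of_subset (Finset.filter_subset _ _)

lemma psum_split {ℓ : ℕ} (x : Fin ℓ → ℕ) (i : Fin ℓ) :
    psum x i = x i + ∑ j ∈ Finset.univ.filter (fun j => j < i), x j := by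
  rw [psum, ← Finset.sum_insert (s := Finset.univ.filter (fun j => j < i)) (by simp)]
  congr 1
  ext j
  simp only [Finset.mem_filter, Finset.mem_univ, true_and, Finset.mem_insert]
  constructor
  · intro h
    rcases eq_or_lt_of_le h with h | h
    · exact Or.inl h
    · exact Or.inr h
  · rintro (rfl | h)
    · exact le_refl _
    · exact h.le

lemma psum_inj {ℓ : ℕ} {x y : Fin ℓ → ℕ} (h : ∀ i, psum x i = psum y i) :
    x = y := by
  have key : ∀ n : ℕ, ∀ i : Fin ℓ, (i : ℕ) = n → x i = y i := by
    intro n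
    induction n using Nat.strong_induction_on with
    | _ n ih =>
      rintro i rfl
      have hx := psum_split x i
      have hy := psum_split y i
      have hsum : ∑ j ∈ Finset.univ.filter (fun j => j < i), x j
          = ∑ j ∈ Finset.univ.filter (fun j => j < i), y j := by
        apply Finset.sum_congr rfl
        intro j hj
        simp only [Finset.mem_filter, Finset.mem_univ, true_and] at hj
        exact ih j.val hj j rfl
      have := h i
      omega
  funext i
  exact key i.val i rfl

/-- Combinatorial counting lemma: if `1 ≤ U ≤ m` and `w = W(m)` is the Lambert
`W` value of `m` (i.e. `w·e^w = m`, `w ≥ 0`), then the number of tuples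
`(ℓ, x₁, …, x_ℓ)` of positive integers with `x₁ + ⋯ + x_ℓ ≤ (U - ℓ)·m` is at
most `U·e^{W(m)(U+1)}`. -/
theorem counting_lemma (U : ℕ) (m w : ℝ) (hU : 1 ≤ U) (hm : (U : ℝ) ≤ m)
    (hw0 : 0 ≤ w) (hw : w * Real.exp w = m) :
    (Nat.card {p : Σ ℓ : ℕ, Fin ℓ → ℕ //
        1 ≤ p.1 ∧ (∀ i, 1 ≤ p.2 i) ∧
          (∑ i, (p.2 i : ℝ)) ≤ ((U : ℝ) - (p.1 : ℝ)) * m} : ℝ)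
      ≤ (U : ℝ) * Real.exp (w * ((U : ℝ) + 1)) := by
  classical
  have hU1 : (1 : ℝ) ≤ (U : ℝ) := by exact_mod_cast hU
  have hm0 : (0 : ℝ) < m := lt_of_lt_of_le (lt_of_lt_of_le one_pos hU1) hm
  set N : ℕ → ℕ := fun ℓ => ⌊((U : ℝ) - ℓ) * m⌋₊ with hNdef
  set T : Finset (ℕ × Finset ℕ) :=
    (Finset.range U).biUnion (fun k =>
      ((Finset.range (N (k + 1))).powersetCard (k + 1)).image (fun s => (k + 1, s)))
    with hTdef
  set S := {p : Σ ℓ : ℕ, Fin ℓ → ℕ //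
        1 ≤ p.1 ∧ (∀ i, 1 ≤ p.2 i) ∧
          (∑ i, (p.2 i : ℝ)) ≤ ((U : ℝ) - (p.1 : ℝ)) * m} with hSdef
  let G : S → ℕ × Finset ℕ :=
    fun p => (p.1.1, Finset.univ.image (fun i => psum p.1.2 i - 1))
  -- basic facts
  have hlU : ∀ (l : ℕ) (x : Fin l → ℕ), 1 ≤ l → (∀ i, 1 ≤ x i) →
      (∑ i, (x i : ℝ)) ≤ ((U : ℝ) - l) * m → l < U := by
    intro l x h1 hx hs
    have hl1 : (1 : ℝ) ≤ (l : ℝ) := by exact_mod_cast h1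
    have hsum_ge : (l : ℝ) ≤ ∑ i, (x i : ℝ) := by
      calc (l : ℝ) = ∑ _i : Fin l, (1 : ℝ) := by simp
      _ ≤ ∑ i, (x i : ℝ) := by
          apply Finset.sum_le_sum
          intro i _
          exact_mod_cast hx i
    have : (l : ℝ) < (U : ℝ) := by nlinarith
    exact_mod_cast this
  have hbound : ∀ (l : ℕ) (x : Fin l → ℕ),
      (∑ i, (x i : ℝ)) ≤ ((U : ℝ) - l) * m → ∀ i, psum x i ≤ N l := by
    intro l x hs i
    have h2 : ((∑ j, x j : ℕ) : ℝ) ≤ ((U : ℝ) - l) * m := by push_cast; exact hs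
    exact le_trans (psum_le_total x i) (Nat.le_floor h2)
  have hGmem : ∀ p : S, G p ∈ T := by
    rintro ⟨⟨l, x⟩, h1, hx, hs⟩
    dsimp only at h1 hx hs
    have hlU' : l < U := hlU l x h1 hx hs
    have hb : ∀ i, psum x i ≤ N l := hbound l x hs
    simp only [hTdef, Finset.mem_biUnion, Finset.mem_range, Finset.mem_image,
      Finset.mem_powersetCard]
    have hll : l - 1 + 1 = l := by omega
    refine ⟨l - 1, by omega, Finset.univ.image (fun i => psum x i - 1), ⟨?_, ?_⟩, ?_⟩
    · intro a ha
      simp only [Finset.mem_image, Finset.mem_univ, true_and] at ha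
      obtain ⟨i, rfl⟩ := ha
      have h3 := hb i
      have h4 := one_le_psum hx i
      simp only [Finset.mem_range, hll]
      omega
    · have hsm : StrictMono (fun i => psum x i - 1) := by
        intro a b hab
        have h5 := psum_strictMono hx hab
        have h6 := one_le_psum hx a
        simp only
        omega
      rw [Finset.card_image_of_injective _ hsm.injective, Finset.card_univ,
        Fintype.card_fin]
      omega
    · simp [G, hll]
  have hGinj : Function.Injective G := by
    rintro ⟨⟨la, xa⟩, h1a, hxa, hsa⟩ ⟨⟨lb, xb⟩, h1b, hxb, hsb⟩ hab
    simp only [G, Prod.mk.injEq] at hab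
    obtain ⟨hl, hs⟩ := hab
    subst hl
    try dsimp only at h1a hxa hsa h1b hxb hsb hs
    have hsma : StrictMono (fun i => psum xa i - 1) := by
      intro a b hab'
      have h5 := psum_strictMono hxa hab'
      have h6 := one_le_psum hxa a
      simp only
      omega
    have hsmb : StrictMono (fun i => psum xb i - 1) := by
      intro a b hab'
      have h5 := psum_strictMono hxb hab'
      have h6 := one_le_psum hxb a
      simp only
      omega
    have hrange : Set.range (fun i => psum xa i - 1)
        = Set.range (fun i => psum xb i - 1) := by
      rw [← Set.image_univ, ← Set.image_univ, ← Finset.coe_univ, ← Finset.coe_image,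
        ← Finset.coe_image, hs]
    haveI : WellFoundedLT (Fin la) := inferInstance
    have hfun := (StrictMono.range_inj hsma hsmb).mp hrange
    have hxy : xa = xb := by
      apply psum_inj
      intro i
      have h7 := congrFun hfun i
      have h8 := one_le_psum hxa i
      have h9 := one_le_psum hxb i
      omega
    subst hxy
    rfl
  -- cardinality bound
  have h1 : Nat.card S ≤ T.card := by
    have h0 : Nat.card S ≤ Nat.card {t // t ∈ T} := by
      apply Nat.card_le_card_of_injective (fun p => (⟨G p, hGmem p⟩ : {t // t ∈ T}))
      intro a b hab
      exact hGinj (congrArg Subtype.val hab)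
    simpa [Nat.card_eq_finsetCard] using h0
  have h2 : T.card ≤ ∑ k ∈ Finset.range U, (N (k + 1)).choose (k + 1) := by
    refine le_trans (Finset.card_biUnion_le) ?_
    apply Finset.sum_le_sum
    intro k _
    refine le_trans (Finset.card_image_le) ?_
    rw [Finset.card_powersetCard, Finset.card_range]
  -- real bound
  have hterm : ∀ k ∈ Finset.range U,
      ((N (k + 1)).choose (k + 1) : ℝ) ≤ Real.exp (w * U) := by
    intro k hk
    rw [Finset.mem_range] at hk
    set r : ℕ := k + 1 with hr
    have hrU : (r : ℝ) ≤ (U : ℝ) := by exact_mod_cast hk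
    set c : ℝ := (U : ℝ) - r with hc
    have hc0 : 0 ≤ c := by simp only [hc]; linarith
    have hNc : (N r : ℝ) ≤ c * m := by
      refine le_trans (Nat.floor_le (by positivity)) ?_
      simp [hc]
    calc ((N r).choose r : ℝ) ≤ ((N r : ℝ)) ^ r / (r.factorial : ℝ) := by
          exact_mod_cast Nat.choose_le_pow_div r (N r)
    _ ≤ (c * m) ^ r / (r.factorial : ℝ) := by
          gcongr
    _ = ((c * w) ^ r / (r.factorial : ℝ)) * Real.exp (r * w) := by
          have hcm : c * m = (c * w) * Real.exp w := by rw [← hw]; ring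
          rw [hcm, mul_pow, Real.exp_nat_mul]
          ring
    _ ≤ Real.exp (c * w) * Real.exp (r * w) := by
          gcongr ?_ * _
          exact Real.pow_div_factorial_le_exp (c * w) (by positivity) r
    _ = Real.exp (c * w + r * w) := (Real.exp_add _ _).symm
    _ = Real.exp (w * U) := by
          congr 1
          simp only [hc]
          ring
  calc (Nat.card S : ℝ) ≤ (T.card : ℝ) := by exact_mod_cast h1
  _ ≤ ∑ k ∈ Finset.range U, ((N (k + 1)).choose (k + 1) : ℝ) := by exact_mod_cast h2
  _ ≤ ∑ _k ∈ Finset.range U, Real.exp (w * U) := Finset.sum_le_sum hterm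
  _ = (U : ℝ) * Real.exp (w * U) := by simp [mul_comm]
  _ ≤ (U : ℝ) * Real.exp (w * ((U : ℝ) + 1)) := by
      have hle : w * (U : ℝ) ≤ w * ((U : ℝ) + 1) := by nlinarith
      exact mul_le_mul_of_nonneg_left (Real.exp_le_exp.mpr hle) (Nat.cast_nonneg U)
end

section
/- For any finite word w in the alphabet {a,b}, the Nielsen substitutions satisfy b·U(w*) = U(w)*·b and V(w*)·a = a·V(w)*, where w* denotes the reversal of w. In particular, if w is a palindrome then b·U(w) and V(w)·a are palindromes. -/
/-- Words in the alphabet `{a, b}` encoded as lists of booleans, with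
`a = [false]` and `b = [true]`. The Nielsen substitution `U : a ↦ ab, b ↦ b`. -/
def subU : List Bool → List Bool :=
  fun l => l.flatMap (fun x => if x then [true] else [false, true])

/-- The Nielsen substitution `V : a ↦ a, b ↦ ab`. -/
def subV : List Bool → List Bool :=
  fun l => l.flatMap (fun x => if x then [false, true] else [false])

/-!
Both substitutions are letter-to-word maps, so `U(w)* = U*(w*)` where `U*` maps each letter to the
reversal of its image, and likewise for `V`. Letter by letter, `b` conjugates `U` into `U*`
(`b·ab = ba·b`, `b·b = b·b`) and `a` conjugates `V*` into `V` (`a·a = a·a`, `ab·a = a·ba`); a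
conjugacy that holds on every letter extends to every word.
-/

namespace List

theorem append_flatMap_eq_flatMap_append {α β : Type*} (c : List β) {f g : α → List β}
    (h : ∀ x, c ++ f x = g x ++ c) (l : List α) : c ++ l.flatMap f = l.flatMap g ++ c := by
  induction l with
  | nil => simp
  | cons x l ih => rw [flatMap_cons, flatMap_cons, ← append_assoc, h, append_assoc, ih, append_assoc]

end List

theorem true_append_subU_reverse (w : List Bool) :
    [true] ++ subU w.reverse = (subU w).reverse ++ [true] := by
  simp only [subU, List.reverse_flatMap]
  exact List.append_flatMap_eq_flatMap_append _ (by decide) _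

theorem subV_reverse_append_false (w : List Bool) :
    subV w.reverse ++ [false] = [false] ++ (subV w).reverse := by
  simp only [subV, List.reverse_flatMap]
  exact (List.append_flatMap_eq_flatMap_append _ (by decide) _).symm

/-- `b·U(w*) = U(w)*·b` and `V(w*)·a = a·V(w)*`; in particular, if `w` is a
palindrome then so are `b·U(w)` and `V(w)·a`. -/
theorem nielsen_reverse (w : List Bool) :
    ([true] ++ subU w.reverse = (subU w).reverse ++ [true] ∧
        subV w.reverse ++ [false] = [false] ++ (subV w).reverse) ∧
      (w.reverse = w →
        ([true] ++ subU w).reverse = [true] ++ subU w ∧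
          (subV w ++ [false]).reverse = subV w ++ [false]) := by
  refine ⟨⟨true_append_subU_reverse w, subV_reverse_append_false w⟩, fun hw => ⟨?_, ?_⟩⟩
  · have hU := true_append_subU_reverse w
    rw [hw] at hU
    rw [List.reverse_append, List.reverse_singleton, hU]
  · have hV := subV_reverse_append_false w
    rw [hw] at hV
    rw [List.reverse_append, List.reverse_singleton, hV]
end
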